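/- arXiv:1310.6925 — 7 statements merged into one kernel-verified Lean document; each statement's English description precedes it below -/
import Mathlib

section
/- Suppose F_i > 0 for every vertex i ∈ V. If the full vertex set V is not a feasible placement, then no feasible placement exists; that is, checking the all-ones candidate solution certifies infeasibility of EVCSPP. -/
/-!
A vertex with positive demand must have a selected site in its one-hop set `N i`, so every
vertex is within one edge of a feasible `S`; since `S` induces a connected subgraph, `G` itself
is connected. Capacities being nonnegative, passing from `S` to all of `V` only adds supply.
-/

open Finset

/-- A set `S` of candidate sites is a feasible charging-station placement:
(i) the subgraph of `G` induced by `S` is connected (hence `S` is nonempty), and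
(ii) every vertex's demand `F i` is met by the total capacity of selected sites
in its one-hop neighborhood set `N i`. -/
def Feasible {V : Type*} [Fintype V] [DecidableEq V]
    (G : SimpleGraph V) (f F : V → ℝ) (N : V → Finset V) (S : Finset V) : Prop :=
  (G.induce (S : Set V)).Connected ∧ ∀ i : V, F i ≤ ∑ j ∈ N i ∩ S, f j

namespace SimpleGraph

variable {V : Type*} {G : SimpleGraph V}

lemma connected_induce_univ_iff : (G.induce Set.univ).Connected ↔ G.Connected :=
  G.induceUnivIso.connected_iff

lemma Connected.of_induce_of_forall_exists_reachable {s : Set V} (hs : (G.induce s).Connected)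
    (hreach : ∀ v, ∃ u ∈ s, G.Reachable v u) : G.Connected := by
  obtain ⟨⟨u, hu⟩⟩ := hs.nonempty
  refine (connected_iff_exists_forall_reachable G).mpr ⟨u, fun v => ?_⟩
  obtain ⟨w, hw, hvw⟩ := hreach v
  exact ((hs ⟨u, hu⟩ ⟨w, hw⟩).map (Embedding.induce s).toHom).trans hvw.symm

end SimpleGraph

namespace Feasible

variable {V : Type*} [Fintype V] [DecidableEq V] {G : SimpleGraph V} {f F : V → ℝ}
  {N : V → Finset V} {S T : Finset V}

lemma inter_nonempty (hS : Feasible G f F N S) {i : V} (hFi : 0 < F i) :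
    (N i ∩ S).Nonempty :=
  nonempty_of_sum_ne_zero (hFi.trans_le (hS.2 i)).ne'

lemma connected (hS : Feasible G f F N S) (hNadj : ∀ i, ∀ j ∈ N i, j = i ∨ G.Adj i j)
    (hF : ∀ i, 0 < F i) : G.Connected := by
  refine hS.1.of_induce_of_forall_exists_reachable fun i => ?_
  obtain ⟨j, hj⟩ := hS.inter_nonempty (hF i)
  obtain ⟨hjN, hjS⟩ := mem_inter.mp hj
  refine ⟨j, mem_coe.mpr hjS, ?_⟩
  rcases hNadj i j hjN with hji | hij
  · exact hji ▸ SimpleGraph.Reachable.refl j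
  · exact hij.reachable

lemma of_subset (hS : Feasible G f F N S) (hf : ∀ j, 0 ≤ f j) (hST : S ⊆ T)
    (hT : (G.induce (T : Set V)).Connected) : Feasible G f F N T :=
  ⟨hT, fun i => (hS.2 i).trans <|
    sum_le_sum_of_subset_of_nonneg (inter_subset_inter_left hST) fun j _ _ => hf j⟩

end Feasible

theorem infeasible_of_univ_infeasible_general {V : Type*} [Fintype V] [DecidableEq V]
    (G : SimpleGraph V) (f F : V → ℝ) (N : V → Finset V)
    (hf : ∀ j, 0 ≤ f j)
    (hNadj : ∀ i, ∀ j ∈ N i, j = i ∨ G.Adj i j)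
    (hF : ∀ i, 0 < F i)
    (huniv : ¬ Feasible G f F N (univ : Finset V)) :
    ¬ ∃ S : Finset V, Feasible G f F N S := by
  rintro ⟨S, hS⟩
  have hG : (G.induce ((univ : Finset V) : Set V)).Connected := by
    rw [coe_univ, SimpleGraph.connected_induce_univ_iff]
    exact hS.connected hNadj hF
  exact huniv (hS.of_subset hf (subset_univ S) hG)

/-- If all demands are positive and the full vertex set is not a feasible placement,
then no feasible placement exists. -/
theorem infeasible_of_univ_infeasible {V : Type*} [Fintype V] [DecidableEq V]
    (G : SimpleGraph V) (f F : V → ℝ) (N : V → Finset V)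
    (hf : ∀ j, 0 ≤ f j)
    (hNmem : ∀ i, i ∈ N i)
    (hNadj : ∀ i, ∀ j ∈ N i, j = i ∨ G.Adj i j)
    (hF : ∀ i, 0 < F i)
    (huniv : ¬ Feasible G f F N (univ : Finset V)) :
    ¬ ∃ S : Finset V, Feasible G f F N S :=
  infeasible_of_univ_infeasible_general G f F N hf hNadj hF huniv
end

section
/- Suppose F_i > 0 for every vertex i ∈ V. If S is a feasible placement and j ∈ V \ S, then S ∪ {j} is also a feasible placement. (The demand constraints are preserved because capacities are nonnegative, and connectivity is preserved because the demand constraint at j forces some selected vertex k ∈ N_j ∩ S, which is a neighbor of j in Ĝ.) -/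
open Finset

lemma SimpleGraph.induce_insert_connected_of_adj {V : Type*} {G : SimpleGraph V} {s : Set V}
    {u v : V} (hs : (G.induce s).Connected) (hv : v ∈ s) (huv : G.Adj u v) :
    (G.induce (insert u s)).Connected := by
  have hpair : insert u s = {u, v} ∪ s := by
    rw [Set.insert_union, Set.singleton_union, Set.insert_eq_of_mem hv]
  rw [hpair]
  exact induce_union_connected (induce_pair_connected_of_adj huv).preconnected hs.preconnected
    ⟨v, by simp, hv⟩

lemma Feasible.exists_adj_mem {V : Type*} [Fintype V] [DecidableEq V]
    {G : SimpleGraph V} {f F : V → ℝ} {N : V → Finset V} {S : Finset V} {j : V}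
    (hS : Feasible G f F N S) (hNadj : ∀ k ∈ N j, k = j ∨ G.Adj j k) (hFj : 0 < F j)
    (hj : j ∉ S) : ∃ k ∈ S, G.Adj j k := by
  have hsum : ∑ k ∈ N j ∩ S, f k ≠ 0 := (hFj.trans_le (hS.2 j)).ne'
  obtain ⟨k, hk, -⟩ := exists_ne_zero_of_sum_ne_zero hsum
  obtain ⟨hkN, hkS⟩ := mem_inter.mp hk
  refine ⟨k, hkS, (hNadj k hkN).resolve_left ?_⟩
  rintro rfl
  exact hj hkS

theorem feasible_insert_general {V : Type*} [Fintype V] [DecidableEq V]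
    (G : SimpleGraph V) (f F : V → ℝ) (N : V → Finset V)
    (hf : ∀ j, 0 ≤ f j)
    (hNadj : ∀ i, ∀ j ∈ N i, j = i ∨ G.Adj i j)
    (hF : ∀ i, 0 < F i)
    (S : Finset V) (hS : Feasible G f F N S)
    (j : V) (hj : j ∉ S) :
    Feasible G f F N (insert j S) := by
  obtain ⟨k, hkS, hjk⟩ := hS.exists_adj_mem (hNadj j) (hF j) hj
  refine ⟨?_, fun i => (hS.2 i).trans ?_⟩
  · rw [coe_insert]
    exact SimpleGraph.induce_insert_connected_of_adj hS.1 (mem_coe.mpr hkS) hjk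
  · exact sum_le_sum_of_subset_of_nonneg (inter_subset_inter_left (subset_insert j S))
      fun x _ _ => hf x

/-- If all demands are positive, adding any vertex `j ∉ S` to a feasible placement `S`
yields another feasible placement. -/
theorem feasible_insert {V : Type*} [Fintype V] [DecidableEq V]
    (G : SimpleGraph V) (f F : V → ℝ) (N : V → Finset V)
    (hf : ∀ j, 0 ≤ f j)
    (hNmem : ∀ i, i ∈ N i)
    (hNadj : ∀ i, ∀ j ∈ N i, j = i ∨ G.Adj i j)
    (hF : ∀ i, 0 < F i)
    (S : Finset V) (hS : Feasible G f F N S)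
    (j : V) (hj : j ∉ S) :
    Feasible G f F N (insert j S) :=
  feasible_insert_general G f F N hf hNadj hF S hS j hj
end

section
/- Suppose F_i > 0 for every vertex i ∈ V. Then feasibility is upward closed: if S is a feasible placement and S ⊆ T ⊆ V, then T is also a feasible placement. -/
open Finset

/-! Positive demand at `i` forces a selected site in `N i`, i.e. `i` is selected or adjacent to a
selected site. Hence `S` dominates every vertex, and adding dominated vertices to a set inducing a
connected subgraph keeps the induced subgraph connected; the capacities only grow. -/

lemma SimpleGraph.induce_connected_of_forall_exists_eq_or_adj {V : Type*} {G : SimpleGraph V}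
    {s t : Set V} (hs : (G.induce s).Connected) (hst : s ⊆ t)
    (hdom : ∀ v ∈ t, ∃ w ∈ s, w = v ∨ G.Adj w v) : (G.induce t).Connected := by
  obtain ⟨⟨u, hu⟩⟩ := hs.nonempty
  refine G.induce_connected_of_patches u (hst hu) fun {v} hv => ?_
  obtain ⟨w, hw, rfl | hwv⟩ := hdom v hv
  · exact ⟨s, hst, hu, hw, hs.preconnected _ _⟩
  · have hconn : (G.induce (s ∪ {w, v})).Connected :=
      G.induce_union_connected hs.preconnected
        (G.induce_pair_connected_of_adj hwv).preconnected ⟨w, hw, by simp⟩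
    refine ⟨s ∪ {w, v}, ?_, Or.inl hu, Or.inr (by simp), hconn.preconnected _ _⟩
    simp [Set.insert_subset_iff, hst, hst hw, hv]

section

variable {V : Type*} [Fintype V] [DecidableEq V] {G : SimpleGraph V} {f F : V → ℝ}
  {N : V → Finset V} {S : Finset V}

lemma Feasible.exists_mem_eq_or_adj (hS : Feasible G f F N S)
    (hNadj : ∀ i, ∀ j ∈ N i, j = i ∨ G.Adj i j) {i : V} (hFi : 0 < F i) :
    ∃ j ∈ S, j = i ∨ G.Adj j i := by
  obtain ⟨j, hj⟩ : (N i ∩ S).Nonempty :=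
    nonempty_of_sum_ne_zero (hFi.trans_le (hS.2 i)).ne'
  obtain ⟨hjN, hjS⟩ := mem_inter.mp hj
  exact ⟨j, hjS, (hNadj i j hjN).imp_right SimpleGraph.Adj.symm⟩

lemma Feasible.demand_le_of_subset (hS : Feasible G f F N S) (hf : ∀ j, 0 ≤ f j)
    {T : Finset V} (hST : S ⊆ T) (i : V) : F i ≤ ∑ j ∈ N i ∩ T, f j :=
  (hS.2 i).trans <|
    sum_le_sum_of_subset_of_nonneg (inter_subset_inter_left hST) fun j _ _ => hf j

end

theorem feasible_upward_closed_general {V : Type*} [Fintype V] [DecidableEq V]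
    (G : SimpleGraph V) (f F : V → ℝ) (N : V → Finset V)
    (hf : ∀ j, 0 ≤ f j)
    (hNadj : ∀ i, ∀ j ∈ N i, j = i ∨ G.Adj i j)
    (hF : ∀ i, 0 < F i)
    (S T : Finset V) (hS : Feasible G f F N S) (hST : S ⊆ T) :
    Feasible G f F N T :=
  ⟨G.induce_connected_of_forall_exists_eq_or_adj hS.1 (coe_subset.mpr hST)
      fun v _ => hS.exists_mem_eq_or_adj hNadj (hF v),
    hS.demand_le_of_subset hf hST⟩

/-- If all demands are positive, feasibility is upward closed: any superset of a
feasible placement is feasible. -/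
theorem feasible_upward_closed {V : Type*} [Fintype V] [DecidableEq V]
    (G : SimpleGraph V) (f F : V → ℝ) (N : V → Finset V)
    (hf : ∀ j, 0 ≤ f j)
    (hNmem : ∀ i, i ∈ N i)
    (hNadj : ∀ i, ∀ j ∈ N i, j = i ∨ G.Adj i j)
    (hF : ∀ i, 0 < F i)
    (S T : Finset V) (hS : Feasible G f F N S) (hST : S ⊆ T) :
    Feasible G f F N T :=
  feasible_upward_closed_general G f F N hf hNadj hF S T hS hST
end

section
/- If N' is a nonempty vertex cover of G̃, then the subgraph of Ĝ induced by the set consisting of the node-vertices corresponding to N' together with all edge-vertices is connected. (The node-vertices of N' form a clique in Ĝ, and every edge-vertex is adjacent to at least one node-vertex of N' because N' is a vertex cover.) -/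
open Finset

/-- The graph `Ĝ` of the reduction: vertices are node-vertices (`Sum.inl`) and
edge-vertices (`Sum.inr`); node-vertices form a clique, a node-vertex is adjacent to an
edge-vertex iff it is an endpoint of that edge, and edge-vertices are pairwise
nonadjacent. -/
def hatG {N : Type*} (G : SimpleGraph N) : SimpleGraph (N ⊕ G.edgeSet) where
  Adj x y :=
    match x, y with
    | Sum.inl i, Sum.inl j => i ≠ j
    | Sum.inl i, Sum.inr e => i ∈ (e : Sym2 N)
    | Sum.inr e, Sum.inl i => i ∈ (e : Sym2 N)
    | Sum.inr _, Sum.inr _ => False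
  symm := by
    constructor
    rintro (i | e) (j | e') h <;> simp_all
    exact fun h' => h h'.symm
  loopless := by constructor; rintro (i | e) h <;> simp_all

/-- A set of vertices of `Ĝ` is feasible if it induces a connected subgraph and
satisfies the demand constraint: it contains at least `|Ẽ|` edge-vertices. -/
def RFeasible {N : Type*} [Fintype N] [DecidableEq N] (G : SimpleGraph N)
    [DecidableRel G.Adj] (S : Finset (N ⊕ G.edgeSet)) : Prop :=
  ((hatG G).induce (S : Set (N ⊕ G.edgeSet))).Connected ∧
    G.edgeFinset.card ≤ (S.filter (fun x => x.isRight = true)).card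

/-- The cost of a set of vertices of `Ĝ` is its number of node-vertices. -/
def rcost {N : Type*} [Fintype N] [DecidableEq N] (G : SimpleGraph N)
    [DecidableRel G.Adj] (S : Finset (N ⊕ G.edgeSet)) : ℕ :=
  (S.filter (fun x => x.isLeft = true)).card

/-- `N'` is a vertex cover of `G`: every edge of `G` has an endpoint in `N'`. -/
def IsVertexCover {N : Type*} (G : SimpleGraph N) (N' : Finset N) : Prop :=
  ∀ e ∈ G.edgeSet, ∃ i ∈ N', i ∈ e

namespace SimpleGraph

variable {V : Type*} {G : SimpleGraph V}

theorem induce_connected_of_isClique_of_dominating {s c : Set V} (hcs : c ⊆ s)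
    (hc : G.IsClique c) (hcne : c.Nonempty) (hdom : ∀ v ∈ s \ c, ∃ u ∈ c, G.Adj u v) :
    (G.induce s).Connected := by
  obtain ⟨u₀, hu₀⟩ := hcne
  have reach_clique : ∀ u (hu : u ∈ c),
      (G.induce s).Reachable ⟨u₀, hcs hu₀⟩ ⟨u, hcs hu⟩ := fun u hu => by
    by_cases h : u₀ = u
    · subst h; rfl
    · exact Adj.reachable (hc hu₀ hu h)
  rw [connected_iff_exists_forall_reachable]
  refine ⟨⟨u₀, hcs hu₀⟩, fun ⟨v, hv⟩ => ?_⟩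
  by_cases hvc : v ∈ c
  · exact reach_clique v hvc
  · obtain ⟨u, hu, huv⟩ := hdom v ⟨hv, hvc⟩
    exact (reach_clique u hu).trans
      (show (G.induce s).Adj ⟨u, hcs hu⟩ ⟨v, hv⟩ from huv).reachable

end SimpleGraph

theorem hatG_isClique_range_inl {N : Type*} (G : SimpleGraph N) :
    (hatG G).IsClique (Set.range Sum.inl) := by
  rintro _ ⟨i, rfl⟩ _ ⟨j, rfl⟩ hij
  exact fun h => hij (congrArg Sum.inl h)

theorem IsVertexCover.exists_hatG_adj_inr {N : Type*} {G : SimpleGraph N} {N' : Finset N}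
    (hvc : IsVertexCover G N') (e : G.edgeSet) :
    ∃ i ∈ N', (hatG G).Adj (Sum.inl i) (Sum.inr e) :=
  hvc e e.2

theorem induced_connected_of_vertexCover_general {N : Type*} [Fintype N] [DecidableEq N]
    (G : SimpleGraph N) [DecidableRel G.Adj]
    (N' : Finset N) (hne : N'.Nonempty) (hvc : IsVertexCover G N') :
    ((hatG G).induce
      ((N'.image Sum.inl ∪ (univ : Finset G.edgeSet).image Sum.inr :
        Finset (N ⊕ G.edgeSet)) : Set (N ⊕ G.edgeSet))).Connected := by
  refine SimpleGraph.induce_connected_of_isClique_of_dominating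
    (c := ((N'.image Sum.inl : Finset (N ⊕ G.edgeSet)) : Set (N ⊕ G.edgeSet)))
    (by simp) ((hatG_isClique_range_inl G).subset (by simp)) (by simpa using hne) ?_
  rintro (i | e) ⟨hv, hnode⟩
  · simp_all
  · obtain ⟨i, hi, hie⟩ := hvc.exists_hatG_adj_inr e
    exact ⟨Sum.inl i, by simpa using hi, hie⟩

/-- If `N'` is a nonempty vertex cover of `G̃`, then the subgraph of `Ĝ` induced by
the node-vertices of `N'` together with all edge-vertices is connected. -/
theorem induced_connected_of_vertexCover {N : Type*} [Fintype N] [DecidableEq N]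
    (G : SimpleGraph N) [DecidableRel G.Adj]
    (hE : G.edgeFinset.Nonempty)
    (N' : Finset N) (hne : N'.Nonempty) (hvc : IsVertexCover G N') :
    ((hatG G).induce
      ((N'.image Sum.inl ∪ (univ : Finset G.edgeSet).image Sum.inr :
        Finset (N ⊕ G.edgeSet)) : Set (N ⊕ G.edgeSet))).Connected :=
  induced_connected_of_vertexCover_general G N' hne hvc
end

section
/- If S is a feasible set in the reduction instance and S contains at least one node-vertex, then N' = {i ∈ Ñ : the node-vertex of i lies in S} is a vertex cover of G̃, and |N'| equals the cost of S. (Since the induced subgraph on S is connected and contains every edge-vertex, each edge-vertex e ∈ S must be adjacent in Ĝ to some other vertex of S; the only possible neighbors of an edge-vertex are node-vertices of its endpoints, so every edge of G̃ has an endpoint in N'.) -/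
open Finset

lemma Finset.map_inl_toLeft {α β : Type*} (u : Finset (α ⊕ β)) :
    u.toLeft.map .inl = u.filter (·.isLeft) := by
  ext (a | b) <;> simp

lemma Finset.map_inr_toRight {α β : Type*} (u : Finset (α ⊕ β)) :
    u.toRight.map .inr = u.filter (·.isRight) := by
  ext (a | b) <;> simp

lemma Finset.toRight_eq_univ_of_card_le {α β : Type*} [Fintype β] {u : Finset (α ⊕ β)}
    (h : Fintype.card β ≤ #(u.filter (·.isRight))) : u.toRight = univ := by
  refine eq_univ_of_card _ (le_antisymm (card_le_univ _) ?_)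
  rwa [← card_map, map_inr_toRight]

lemma SimpleGraph.Preconnected.exists_adj_mem_of_induce {V : Type*} {G : SimpleGraph V}
    {s : Set V} (h : (G.induce s).Preconnected) {u v : V} (hu : u ∈ s) (hv : v ∈ s)
    (huv : u ≠ v) : ∃ w ∈ s, G.Adj u w := by
  have : Nontrivial s := ⟨⟨⟨u, hu⟩, ⟨v, hv⟩, by simpa using huv⟩⟩
  obtain ⟨w, hw⟩ := h.exists_adj_of_nontrivial ⟨u, hu⟩
  exact ⟨w, w.2, hw⟩

lemma hatG_adj_inr {N : Type*} {G : SimpleGraph N} {e : G.edgeSet} {x : N ⊕ G.edgeSet} :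
    (hatG G).Adj (.inr e) x ↔ ∃ i ∈ (e : Sym2 N), x = .inl i := by
  cases x <;> simp [hatG]

theorem vertexCover_of_feasible_general {N : Type*} [Fintype N] [DecidableEq N]
    (G : SimpleGraph N) [DecidableRel G.Adj]
    (S : Finset (N ⊕ G.edgeSet)) (hS : RFeasible G S)
    (hnode : ∃ i : N, Sum.inl i ∈ S) :
    IsVertexCover G ((univ : Finset N).filter (fun i => Sum.inl i ∈ S)) ∧
      ((univ : Finset N).filter (fun i => Sum.inl i ∈ S)).card = rcost G S := by
  obtain ⟨hconn, hcard⟩ := hS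
  obtain ⟨i₀, hi₀⟩ := hnode
  have hnodes : univ.filter (fun i => Sum.inl i ∈ S) = S.toLeft := by ext; simp
  have hedges : S.toRight = univ :=
    toRight_eq_univ_of_card_le (G.edgeFinset_card ▸ hcard)
  refine ⟨fun e he => ?_, by rw [hnodes, rcost, ← card_map, map_inl_toLeft]⟩
  have he_mem : Sum.inr ⟨e, he⟩ ∈ S := mem_toRight.mp (hedges ▸ mem_univ _)
  obtain ⟨x, hxS, hadj⟩ :=
    hconn.preconnected.exists_adj_mem_of_induce he_mem hi₀ Sum.inr_ne_inl
  obtain ⟨i, hie, rfl⟩ := hatG_adj_inr.mp hadj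
  exact ⟨i, by simpa using hxS, hie⟩

/-- If `S` is a feasible set of the reduction instance containing at least one
node-vertex, then the set of nodes whose node-vertices lie in `S` is a vertex cover of
`G̃` whose cardinality equals the cost of `S`. -/
theorem vertexCover_of_feasible {N : Type*} [Fintype N] [DecidableEq N]
    (G : SimpleGraph N) [DecidableRel G.Adj]
    (hE : G.edgeFinset.Nonempty)
    (S : Finset (N ⊕ G.edgeSet)) (hS : RFeasible G S)
    (hnode : ∃ i : N, Sum.inl i ∈ S) :
    IsVertexCover G ((univ : Finset N).filter (fun i => Sum.inl i ∈ S)) ∧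
      ((univ : Finset N).filter (fun i => Sum.inl i ∈ S)).card = rcost G S :=
  vertexCover_of_feasible_general G S hS hnode
end

section
/- Let C be a natural number with C ≥ 1. Then G̃ has a vertex cover of size at most C if and only if there exists a feasible set S in the reduction instance whose cost is at most C. (This is the core equivalence underlying the NP-hardness of the Electric Vehicle Charging Station Placement Problem via reduction from the vertex cover problem.) -/
open Finset

/-
A vertex cover `N'` gives the feasible set `N' ⊕ Ẽ`: node-vertices form a clique and every
edge-vertex hangs off a node-vertex of `N'` covering it. Conversely, the demand constraint forces
a feasible set `S` to contain every edge-vertex. If `S` contains a node-vertex, connectivity gives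
each edge-vertex a neighbour in `S`, necessarily an endpoint, so the node-vertices of `S` cover
`G̃`. If it contains none, edge-vertices being pairwise nonadjacent, connectivity forces
`|Ẽ| = 1`, and one endpoint of the only edge is a cover of size `1 ≤ C`.
-/

namespace Finset

variable {α β : Type*} (u : Finset (α ⊕ β))

lemma filter_isLeft_eq_map_toLeft : u.filter (fun x => x.isLeft = true) = u.toLeft.map .inl := by
  ext (a | b) <;> simp

lemma filter_isRight_eq_map_toRight :
    u.filter (fun x => x.isRight = true) = u.toRight.map .inr := by
  ext (a | b) <;> simp

lemma card_filter_isLeft : #(u.filter (fun x => x.isLeft = true)) = #u.toLeft := by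
  rw [filter_isLeft_eq_map_toLeft, card_map]

lemma card_filter_isRight : #(u.filter (fun x => x.isRight = true)) = #u.toRight := by
  rw [filter_isRight_eq_map_toRight, card_map]

end Finset

namespace SimpleGraph

lemma Connected.exists_adj_mem_of_induce {V : Type*} {G : SimpleGraph V} {s : Set V}
    (h : (G.induce s).Connected) (hs : s.Nontrivial) {v : V} (hv : v ∈ s) :
    ∃ u ∈ s, G.Adj v u := by
  have : Nontrivial s := Set.nontrivial_coe_sort.mpr hs
  obtain ⟨u, hu⟩ := h.preconnected.exists_adj_of_nontrivial ⟨v, hv⟩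
  exact ⟨u, u.2, hu⟩

end SimpleGraph

section HatG

variable {N : Type*} {G : SimpleGraph N} {i j : N} {e e' : G.edgeSet} {S : Finset (N ⊕ G.edgeSet)}

@[simp] lemma hatG_adj_inl_inl : (hatG G).Adj (.inl i) (.inl j) ↔ i ≠ j := Iff.rfl

@[simp] lemma hatG_adj_inl_inr : (hatG G).Adj (.inl i) (.inr e) ↔ i ∈ (e : Sym2 N) := Iff.rfl

@[simp] lemma hatG_adj_inr_inl : (hatG G).Adj (.inr e) (.inl i) ↔ i ∈ (e : Sym2 N) := Iff.rfl

@[simp] lemma not_hatG_adj_inr_inr : ¬(hatG G).Adj (.inr e) (.inr e') := id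

lemma IsVertexCover.singleton (h : G.edgeSet.Subsingleton) {e : Sym2 N} (he : e ∈ G.edgeSet)
    (hi : i ∈ e) : IsVertexCover G {i} :=
  fun _ hf => ⟨i, mem_singleton_self i, h hf he ▸ hi⟩

lemma hatG_induce_connected_of_isVertexCover (hcover : IsVertexCover G S.toLeft)
    (hleft : S.toLeft.Nonempty) :
    ((hatG G).induce (S : Set (N ⊕ G.edgeSet))).Connected := by
  obtain ⟨i, hi⟩ := hleft
  have reach_inl : ∀ j (hj : j ∈ S.toLeft),
      ((hatG G).induce (S : Set (N ⊕ G.edgeSet))).Reachable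
        ⟨.inl i, mem_toLeft.mp hi⟩ ⟨.inl j, mem_toLeft.mp hj⟩ := by
    intro j hj
    rcases eq_or_ne i j with rfl | hij
    · rfl
    · exact (SimpleGraph.induce_adj.mpr (hatG_adj_inl_inl.mpr hij)).reachable
  rw [SimpleGraph.connected_iff_exists_forall_reachable]
  refine ⟨⟨.inl i, mem_toLeft.mp hi⟩, ?_⟩
  rintro ⟨j | e, hw⟩
  · exact reach_inl j (mem_toLeft.mpr hw)
  · obtain ⟨j, hj, hje⟩ := hcover e e.2
    exact (reach_inl j hj).trans
      (SimpleGraph.induce_adj.mpr (hatG_adj_inl_inr.mpr hje)).reachable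

lemma exists_endpoint_mem_toLeft (hS : ((hatG G).induce (S : Set (N ⊕ G.edgeSet))).Connected)
    {x : N ⊕ G.edgeSet} (hx : x ∈ S) {e : G.edgeSet} (he : .inr e ∈ S) (hne : x ≠ .inr e) :
    ∃ i ∈ S.toLeft, i ∈ (e : Sym2 N) := by
  obtain ⟨u, hu, hadj⟩ := hS.exists_adj_mem_of_induce ⟨.inr e, he, x, hx, hne.symm⟩ he
  rcases u with i | e'
  · exact ⟨i, mem_toLeft.mpr hu, hatG_adj_inr_inl.mp hadj⟩
  · exact absurd hadj not_hatG_adj_inr_inr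

lemma isVertexCover_toLeft (hS : ((hatG G).induce (S : Set (N ⊕ G.edgeSet))).Connected)
    (hall : ∀ e : G.edgeSet, .inr e ∈ S) (hleft : S.toLeft.Nonempty) :
    IsVertexCover G S.toLeft := by
  obtain ⟨i, hi⟩ := hleft
  intro e he
  exact exists_endpoint_mem_toLeft hS (mem_toLeft.mp hi) (hall ⟨e, he⟩) Sum.inl_ne_inr

lemma edgeSet_subsingleton_of_toLeft_eq_empty
    (hS : ((hatG G).induce (S : Set (N ⊕ G.edgeSet))).Connected)
    (hall : ∀ e : G.edgeSet, .inr e ∈ S) (hleft : S.toLeft = ∅) : G.edgeSet.Subsingleton := by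
  intro e he f hf
  by_contra hne
  obtain ⟨i, hi, -⟩ := exists_endpoint_mem_toLeft hS (hall ⟨f, hf⟩) (hall ⟨e, he⟩)
    (by simpa [Subtype.ext_iff] using Ne.symm hne)
  simp [hleft] at hi

end HatG

section Feasibility

variable {N : Type*} [Fintype N] [DecidableEq N] {G : SimpleGraph N} [DecidableRel G.Adj]
  {S : Finset (N ⊕ G.edgeSet)}

lemma rcost_eq_card_toLeft : rcost G S = #S.toLeft := card_filter_isLeft S

lemma rfeasible_iff :
    RFeasible G S ↔ ((hatG G).induce (S : Set (N ⊕ G.edgeSet))).Connected ∧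
      ∀ e : G.edgeSet, .inr e ∈ S := by
  simp only [RFeasible, card_filter_isRight, G.edgeFinset_card, ← mem_toRight,
    ← eq_univ_iff_forall, ← card_eq_iff_eq_univ]
  exact and_congr_right fun _ => ⟨fun h => le_antisymm (card_le_univ _) h, ge_of_eq⟩

end Feasibility

/-- Core equivalence of the NP-hardness reduction: for `C ≥ 1`, the graph `G̃` has a
vertex cover of size at most `C` iff the reduction instance has a feasible set of cost
at most `C`. -/
theorem vertexCover_iff_feasible {N : Type*} [Fintype N] [DecidableEq N]
    (G : SimpleGraph N) [DecidableRel G.Adj]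
    (hE : G.edgeFinset.Nonempty)
    (C : ℕ) (hC : 1 ≤ C) :
    (∃ N' : Finset N, IsVertexCover G N' ∧ N'.card ≤ C) ↔
      (∃ S : Finset (N ⊕ G.edgeSet), RFeasible G S ∧ rcost G S ≤ C) := by
  obtain ⟨e, he⟩ := hE
  rw [SimpleGraph.mem_edgeFinset] at he
  constructor
  · rintro ⟨N', hcover, hcard⟩
    obtain ⟨i, hi, -⟩ := hcover e he
    let S : Finset (N ⊕ G.edgeSet) := N'.disjSum univ
    have hleft : S.toLeft = N' := toLeft_disjSum
    refine ⟨S, rfeasible_iff.mpr ⟨?_, fun f => inr_mem_disjSum.mpr (mem_univ f)⟩, ?_⟩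
    · exact hatG_induce_connected_of_isVertexCover (hleft ▸ hcover) (hleft ▸ ⟨i, hi⟩)
    · rwa [rcost_eq_card_toLeft, hleft]
  · rintro ⟨S, hS, hcost⟩
    obtain ⟨hconn, hall⟩ := rfeasible_iff.mp hS
    rw [rcost_eq_card_toLeft] at hcost
    obtain hleft | hleft := S.toLeft.eq_empty_or_nonempty
    · have hsub := edgeSet_subsingleton_of_toLeft_eq_empty hconn hall hleft
      exact ⟨{e.out.1}, .singleton hsub he (Sym2.out_fst_mem e), by simpa using hC⟩
    · exact ⟨S.toLeft, isVertexCover_toLeft hconn hall hleft, hcost⟩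
end

section
/- Let G be a finite simple graph on a finite vertex set V, let S ⊆ V be a nonempty subset, and let i ∈ S. Then the following are equivalent: (1) there exists a flow y : V × V → ℝ such that (a) y(j,k) ≥ 0 for all j, k; (b) y(j,k) = 0 whenever j and k are not adjacent in G; (c) y(j,k) = 0 whenever k ∉ S; and (d) for every vertex k, the inflow balance holds: (|S| if k = i, else 0) + ∑_{j ∈ V} y(j,k) = (1 if k ∈ S, else 0) + ∑_{l ∈ V} y(k,l); (2) every vertex of S is reachable from i in the subgraph of G induced by S. In particular, the single-commodity flow constraints with a source injecting |S| units at i, each vertex of S absorbing one unit, and flow forbidden into vertices outside S, are satisfiable if and only if the induced subgraph on S is connected (given i ∈ S). -/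
/-!
If every vertex of `S` is reachable from `i` inside `S`, route one unit of flow from `i` to each
`k ∈ S` along a walk in the induced subgraph; the sum of these walk flows satisfies all the
constraints. Conversely, let `T ⊆ S` be the set of vertices reachable from `i` inside `S`. No flow
leaves `T`: an edge from `T` to `S \ T` cannot exist and no flow may enter `V \ S`. Summing the
balance equations over `T` thus gives `|S| + inflow(T) = |T| + outflow(T)` with
`outflow(T) ≤ inflow(T)`, so `|S| ≤ |T|` and `T = S`.
-/

open Finset

namespace SimpleGraph.Walk

variable {V : Type*} [DecidableEq V] {G : SimpleGraph V}

def traversals {u w : V} (p : G.Walk u w) (j k : V) : ℕ :=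
  (p.darts.map Dart.toProd).count (j, k)

@[simp]
theorem traversals_nil {u : V} (j k : V) : (nil : G.Walk u u).traversals j k = 0 := rfl

@[simp]
theorem traversals_cons {u v w : V} (h : G.Adj u v) (p : G.Walk v w) (j k : V) :
    (cons h p).traversals j k = (if j = u ∧ k = v then 1 else 0) + p.traversals j k := by
  simp [traversals, List.count_cons, add_comm, eq_comm (a := u), eq_comm (a := v)]

theorem traversals_eq_zero_of_not_adj {u w : V} (p : G.Walk u w) {j k : V} (h : ¬G.Adj j k) :
    p.traversals j k = 0 := by
  refine List.count_eq_zero.2 fun hmem => h ?_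
  obtain ⟨⟨⟨j', k'⟩, hadj⟩, -, hd⟩ := List.mem_map.1 hmem
  obtain ⟨rfl, rfl⟩ := Prod.mk.inj hd
  exact hadj

theorem traversals_eq_zero_of_notMem_support {u w : V} (p : G.Walk u w) {j k : V}
    (h : k ∉ p.support) : p.traversals j k = 0 := by
  refine List.count_eq_zero.2 fun hmem => h ?_
  obtain ⟨⟨⟨j', k'⟩, _⟩, hd, hjk⟩ := List.mem_map.1 hmem
  obtain ⟨rfl, rfl⟩ := Prod.mk.inj hjk
  exact p.dart_snd_mem_support_of_mem_darts hd

theorem traversals_balance [Fintype V] {u w : V} (p : G.Walk u w) (k : V) :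
    (if k = u then 1 else 0) + ∑ j, p.traversals j k =
      (if k = w then 1 else 0) + ∑ l, p.traversals k l := by
  induction p with
  | nil => simp
  | @cons u v w _ p ih =>
    have hin : ∑ j, (if j = u ∧ k = v then 1 else 0) = if k = v then 1 else 0 := by
      by_cases hk : k = v <;> simp [hk]
    have hout : ∑ l, (if k = u ∧ l = v then 1 else 0) = if k = u then 1 else 0 := by
      by_cases hk : k = u <;> simp [hk]
    simp only [traversals_cons, sum_add_distrib, hin, hout]
    omega

end SimpleGraph.Walk

theorem sum_outflow_le_sum_inflow {M V : Type*} [AddCommMonoid M] [PartialOrder M]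
    [IsOrderedAddMonoid M] [Fintype V] {y : V → V → M} (hy : ∀ j k, 0 ≤ y j k) {T : Finset V}
    (hT : ∀ v ∈ T, ∀ l ∉ T, y v l = 0) :
    ∑ v ∈ T, ∑ l, y v l ≤ ∑ v ∈ T, ∑ j, y j v :=
  calc ∑ v ∈ T, ∑ l, y v l = ∑ v ∈ T, ∑ l ∈ T, y v l :=
        sum_congr rfl fun v hv => (sum_subset (subset_univ T) fun l _ hl => hT v hv l hl).symm
    _ = ∑ v ∈ T, ∑ j ∈ T, y j v := sum_comm
    _ ≤ ∑ v ∈ T, ∑ j, y j v :=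
        sum_le_sum fun v _ => sum_le_sum_of_subset_of_nonneg (subset_univ T) fun j _ _ => hy j v

section ConnectivityFlow

variable {V : Type*} [Fintype V] [DecidableEq V] {G : SimpleGraph V} {S : Finset V} {i : V}

structure IsConnectivityFlow (G : SimpleGraph V) (S : Finset V) (i : V) (y : V → V → ℝ) :
    Prop where
  nonneg : ∀ j k, 0 ≤ y j k
  eq_zero_of_not_adj : ∀ j k, ¬G.Adj j k → y j k = 0
  eq_zero_of_notMem : ∀ j k, k ∉ S → y j k = 0
  balance : ∀ k, (if k = i then (S.card : ℝ) else 0) + ∑ j, y j k =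
    (if k ∈ S then 1 else 0) + ∑ l, y k l

theorem IsConnectivityFlow.eq_of_subset_of_forall_adj_mem {y : V → V → ℝ}
    (hy : IsConnectivityFlow G S i y) {T : Finset V} (hTS : T ⊆ S) (hiT : i ∈ T)
    (hT : ∀ v ∈ T, ∀ l ∈ S, G.Adj v l → l ∈ T) :
    T = S := by
  have hout : ∀ v ∈ T, ∀ l ∉ T, y v l = 0 := by
    intro v hv l hl
    by_cases hlS : l ∈ S
    · exact hy.eq_zero_of_not_adj v l fun hadj => hl (hT v hv l hlS hadj)
    · exact hy.eq_zero_of_notMem v l hlS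
  have hsum := sum_congr rfl fun v (_ : v ∈ T) => hy.balance v
  rw [sum_add_distrib, sum_add_distrib, sum_ite_eq', if_pos hiT,
    sum_ite_of_true fun v hv => hTS hv, sum_const, nsmul_one] at hsum
  have hcard : (S.card : ℝ) ≤ T.card := by
    linarith [sum_outflow_le_sum_inflow hy.nonneg hout]
  exact eq_of_subset_of_card_le hTS (by exact_mod_cast hcard)

theorem IsConnectivityFlow.reachable {y : V → V → ℝ} (hy : IsConnectivityFlow G S i y)
    (hi : i ∈ S) (k : V) (hk : k ∈ S) : (G.induce (S : Set V)).Reachable ⟨i, hi⟩ ⟨k, hk⟩ := by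
  classical
  set T := {v ∈ S | ∃ hv : v ∈ S, (G.induce (S : Set V)).Reachable ⟨i, hi⟩ ⟨v, hv⟩}
  have hTS : T = S := by
    refine hy.eq_of_subset_of_forall_adj_mem (filter_subset _ _)
      (mem_filter.2 ⟨hi, hi, .refl _⟩) ?_
    rintro v hv l hl hadj
    obtain ⟨-, _, hreach⟩ := mem_filter.1 hv
    exact mem_filter.2 ⟨hl, hl, hreach.trans (SimpleGraph.induce_adj.2 hadj).reachable⟩
  obtain ⟨-, _, hreach⟩ := mem_filter.1 (hTS ▸ hk : k ∈ T)
  exact hreach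

theorem exists_isConnectivityFlow (hi : i ∈ S)
    (h : ∀ k (hk : k ∈ S), (G.induce (S : Set V)).Reachable ⟨i, hi⟩ ⟨k, hk⟩) :
    ∃ y, IsConnectivityFlow G S i y := by
  let p : ∀ k : S, G.Walk i k := fun k =>
    (h k k.2).some.map (SimpleGraph.Embedding.induce (S : Set V)).toHom
  have hpS : ∀ k v, v ∈ (p k).support → v ∈ S := by
    intro k v hv
    obtain ⟨v', -, rfl⟩ := List.mem_map.1 (SimpleGraph.Walk.support_map _ _ ▸ hv)
    exact v'.2
  refine ⟨fun j l => ∑ k : S, ((p k).traversals j l : ℝ), fun j l => ?_, fun j l hjl => ?_,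
    fun j l hl => ?_, fun v => ?_⟩
  · exact sum_nonneg fun k _ => Nat.cast_nonneg _
  · exact sum_eq_zero fun k _ => by
      rw [(p k).traversals_eq_zero_of_not_adj hjl, Nat.cast_zero]
  · exact sum_eq_zero fun k _ => by
      rw [(p k).traversals_eq_zero_of_notMem_support fun hv => hl (hpS k l hv), Nat.cast_zero]
  · have hbal := sum_congr rfl fun k (_ : k ∈ univ) => (p k).traversals_balance v
    have hsrc : ∑ k : S, (if v = i then 1 else 0) = if v = i then #S else 0 := by
      split_ifs <;> simp
    have hsink : ∑ k : S, (if v = k then 1 else 0) = if v ∈ S then 1 else 0 :=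
      (sum_coe_sort S fun k => if v = k then 1 else 0).trans (sum_ite_eq S v _)
    rw [sum_add_distrib, sum_add_distrib, hsrc, hsink] at hbal
    rw [sum_comm, sum_comm (f := fun l k => ((p k).traversals v l : ℝ))]
    exact_mod_cast hbal

end ConnectivityFlow

theorem flow_iff_reachable_general {V : Type*} [Fintype V] [DecidableEq V]
    (G : SimpleGraph V) (S : Finset V) (i : V) (hi : i ∈ S) :
    (∃ y : V → V → ℝ,
      (∀ j k, 0 ≤ y j k) ∧
      (∀ j k, ¬ G.Adj j k → y j k = 0) ∧
      (∀ j k, k ∉ S → y j k = 0) ∧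
      (∀ k : V,
        (if k = i then (S.card : ℝ) else 0) + ∑ j : V, y j k =
          (if k ∈ S then (1 : ℝ) else 0) + ∑ l : V, y k l)) ↔
      ∀ k : V, ∀ hk : k ∈ S,
        (G.induce (S : Set V)).Reachable ⟨i, hi⟩ ⟨k, hk⟩ := by
  constructor
  · rintro ⟨y, hnonneg, hadj, hS, hbal⟩
    exact IsConnectivityFlow.reachable ⟨hnonneg, hadj, hS, hbal⟩ hi
  · intro h
    obtain ⟨y, hy⟩ := exists_isConnectivityFlow hi h
    exact ⟨y, hy.nonneg, hy.eq_zero_of_not_adj, hy.eq_zero_of_notMem, hy.balance⟩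

/-- Network-flow characterization of connectivity of an induced subgraph: for a
nonempty `S ⊆ V` and `i ∈ S`, the single-commodity flow constraints — a source
injecting `|S|` units at `i`, one unit absorbed at each vertex of `S`, flow allowed
only along edges of `G` and only into vertices of `S` — are satisfiable iff every
vertex of `S` is reachable from `i` in the subgraph of `G` induced by `S`. -/
theorem flow_iff_reachable {V : Type*} [Fintype V] [DecidableEq V]
    (G : SimpleGraph V) (S : Finset V) (hSne : S.Nonempty) (i : V) (hi : i ∈ S) :
    (∃ y : V → V → ℝ,
      (∀ j k, 0 ≤ y j k) ∧
      (∀ j k, ¬ G.Adj j k → y j k = 0) ∧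
      (∀ j k, k ∉ S → y j k = 0) ∧
      (∀ k : V,
        (if k = i then (S.card : ℝ) else 0) + ∑ j : V, y j k =
          (if k ∈ S then (1 : ℝ) else 0) + ∑ l : V, y k l)) ↔
      ∀ k : V, ∀ hk : k ∈ S,
        (G.induce (S : Set V)).Reachable ⟨i, hi⟩ ⟨k, hk⟩ :=
  flow_iff_reachable_general G S i hi
end
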